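/- Let α ≥ 0 and let b, f : ℝ × ℝ → ℝ be smooth with b(r,λ) > 0 everywhere. Write primes for ∂/∂r and set P := 2/b − (b′)²/b² + (b′)⁴/(4b³) − (b′)²b″/(2b²) + (b″)²/(2b). Suppose b satisfies the DeTurck-modified RG-2 evolution equation for its radial derivative, ∂_λ b′ = b‴ + b″·f′ + b′·f″ − (α/2)·∂_r P, at all points. If at some point (r_a, λ₀) one has b′(r_a,λ₀) = 0, b″(r_a,λ₀) = 0, and b‴(r_a,λ₀) > 0, then ∂_λ b′(r_a,λ₀) = b‴(r_a,λ₀) > 0. In particular, at such a point b′ is strictly increasing in λ, so a minimal surface (b′ = 0) cannot spontaneously form there under the flow. -/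

import Mathlib

/-- The radial partial derivative `∂g/∂r` of a function `g(r,λ)` of two variables. -/
noncomputable def dr (g : ℝ → ℝ → ℝ) (r l : ℝ) : ℝ := deriv (fun s => g s l) r

/-- The quadratic curvature quantity
`P = 2/b − b′²/b² + b′⁴/(4b³) − b′²b″/(2b²) + b″²/(2b)` of the spherically
symmetric `b`-form metric, where primes denote `∂/∂r`. -/
noncomputable def Pquad (b : ℝ → ℝ → ℝ) (r l : ℝ) : ℝ :=
  2 / b r l - (dr b r l) ^ 2 / (b r l) ^ 2 + (dr b r l) ^ 4 / (4 * (b r l) ^ 3)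
    - (dr b r l) ^ 2 * dr (dr b) r l / (2 * (b r l) ^ 2)
    + (dr (dr b) r l) ^ 2 / (2 * b r l)

/-- Under the DeTurck-modified RG-2 evolution
`∂_λ b′ = b‴ + b″f′ + b′f″ − (α/2)∂_r P`, at a point where `b′ = 0`, `b″ = 0`
and `b‴ > 0`, one has `∂_λ b′ = b‴ > 0`: minimal surfaces cannot spontaneously
form under the RG-2 flow (Proposition 3.1 of the paper). -/
theorem rg2_no_spontaneous_minimal_surface
    (α : ℝ) (hα : 0 ≤ α) (b f : ℝ → ℝ → ℝ)
    (hb : ContDiff ℝ (⊤ : ℕ∞) (Function.uncurry b))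
    (hf : ContDiff ℝ (⊤ : ℕ∞) (Function.uncurry f))
    (hbpos : ∀ r l, 0 < b r l)
    (hflow : ∀ r l,
      deriv (fun t => dr b r t) l
        = dr (dr (dr b)) r l + dr (dr b) r l * dr f r l + dr b r l * dr (dr f) r l
          - (α / 2) * dr (Pquad b) r l)
    (ra l₀ : ℝ)
    (h1 : dr b ra l₀ = 0) (h2 : dr (dr b) ra l₀ = 0)
    (h3 : 0 < dr (dr (dr b)) ra l₀) :
    deriv (fun t => dr b ra t) l₀ = dr (dr (dr b)) ra l₀ ∧
      0 < deriv (fun t => dr b ra t) l₀ := by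
  -- Reduce to the one-variable function g s = b s l₀.
  set g : ℝ → ℝ := fun s => b s l₀ with hg_def
  have hg : ContDiff ℝ (⊤ : ℕ∞) g := hb.comp (ContDiff.prodMk contDiff_id contDiff_const)
  have hg' : ContDiff ℝ ((⊤ : ℕ∞) : WithTop ℕ∞) g := hg.of_le (by simp)
  have hg1 : ContDiff ℝ ((⊤ : ℕ∞) : WithTop ℕ∞) (deriv g) := (contDiff_infty_iff_deriv.1 hg').2
  have hg2 : ContDiff ℝ ((⊤ : ℕ∞) : WithTop ℕ∞) (deriv (deriv g)) := (contDiff_infty_iff_deriv.1 hg1).2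
  have e1 : ∀ s, dr b s l₀ = deriv g s := fun s => rfl
  have e2 : ∀ s, dr (dr b) s l₀ = deriv (deriv g) s := by
    intro s
    show deriv (fun s' => dr b s' l₀) s = _
    congr 1
  have e3 : dr (dr (dr b)) ra l₀ = deriv (deriv (deriv g)) ra := by
    show deriv (fun s' => dr (dr b) s' l₀) ra = _
    congr 1
  have hy : deriv g ra = 0 := by rw [← e1]; exact h1
  have hz : deriv (deriv g) ra = 0 := by rw [← e2]; exact h2
  have hgne : g ra ≠ 0 := (hbpos ra l₀).ne'
  have hB : HasDerivAt g (deriv g ra) ra := (hg.differentiable (by simp) ra).hasDerivAt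
  have hB1 : HasDerivAt (deriv g) (deriv (deriv g) ra) ra :=
    (hg1.differentiable (by simp) ra).hasDerivAt
  have hB2 : HasDerivAt (deriv (deriv g)) (deriv (deriv (deriv g)) ra) ra :=
    (hg2.differentiable (by simp) ra).hasDerivAt
  -- The composite expression P as a one-variable function.
  have hPe : (fun s => Pquad b s l₀) = fun s =>
      2 / g s - (deriv g s) ^ 2 / (g s) ^ 2 + (deriv g s) ^ 4 / (4 * (g s) ^ 3)
        - (deriv g s) ^ 2 * deriv (deriv g) s / (2 * (g s) ^ 2)
        + (deriv (deriv g) s) ^ 2 / (2 * g s) := by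
    funext s
    rw [Pquad, e1 s, e2 s]
  -- Derivative of P at ra vanishes.
  have hT1 : HasDerivAt (fun s => 2 / g s)
      ((0 * g ra - 2 * deriv g ra) / (g ra) ^ 2) ra :=
    (hasDerivAt_const ra (2 : ℝ)).div hB hgne
  have hT2 : HasDerivAt (fun s => (deriv g s) ^ 2 / (g s) ^ 2)
      (((2 * (deriv g ra) ^ 1 * deriv (deriv g) ra) * (g ra) ^ 2
        - (deriv g ra) ^ 2 * (2 * (g ra) ^ 1 * deriv g ra)) / ((g ra) ^ 2) ^ 2) ra :=
    (hB1.pow 2).div (hB.pow 2) (pow_ne_zero 2 hgne)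
  have hT3 : HasDerivAt (fun s => (deriv g s) ^ 4 / (4 * (g s) ^ 3))
      (((4 * (deriv g ra) ^ 3 * deriv (deriv g) ra) * (4 * (g ra) ^ 3)
        - (deriv g ra) ^ 4 * (4 * (3 * (g ra) ^ 2 * deriv g ra)))
          / (4 * (g ra) ^ 3) ^ 2) ra :=
    (hB1.pow 4).div ((hB.pow 3).const_mul 4) (by positivity)
  have hT4 : HasDerivAt (fun s => (deriv g s) ^ 2 * deriv (deriv g) s / (2 * (g s) ^ 2))
      ((((2 * (deriv g ra) ^ 1 * deriv (deriv g) ra) * deriv (deriv g) ra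
          + (deriv g ra) ^ 2 * deriv (deriv (deriv g)) ra) * (2 * (g ra) ^ 2)
        - (deriv g ra) ^ 2 * deriv (deriv g) ra * (2 * (2 * (g ra) ^ 1 * deriv g ra)))
          / (2 * (g ra) ^ 2) ^ 2) ra :=
    ((hB1.pow 2).mul hB2).div ((hB.pow 2).const_mul 2) (by positivity)
  have hT5 : HasDerivAt (fun s => (deriv (deriv g) s) ^ 2 / (2 * g s))
      (((2 * (deriv (deriv g) ra) ^ 1 * deriv (deriv (deriv g)) ra) * (2 * g ra)
        - (deriv (deriv g) ra) ^ 2 * (2 * deriv g ra)) / (2 * g ra) ^ 2) ra :=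
    (hB2.pow 2).div (hB.const_mul 2) (by positivity)
  have hP : HasDerivAt (fun s => Pquad b s l₀) 0 ra := by
    rw [hPe]
    have := ((((hT1.sub hT2).add hT3).sub hT4).add hT5)
    refine HasDerivAt.congr_deriv this ?_
    rw [hy, hz]
    norm_num
  have hPzero : dr (Pquad b) ra l₀ = 0 := hP.deriv
  have hmain : deriv (fun t => dr b ra t) l₀ = dr (dr (dr b)) ra l₀ := by
    rw [hflow ra l₀, h1, h2, hPzero]
    ring
  exact ⟨hmain, hmain ▸ h3⟩
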